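/- arXiv:2206.06042 — 5 statements merged into one kernel-verified Lean document; each statement's English description precedes it below -/
import Mathlib

section
/- Let (K, σ) be a σ-field and let a_1, …, a_n ∈ K be pairwise non-σ-conjugate. Then there is a unique monic skew polynomial P(T) ∈ K[T;σ] of degree n whose right roots in K are exactly a_1, …, a_n. Moreover, if Q(T) ∈ K[T;σ] satisfies Q(a_1) = ⋯ = Q(a_n) = 0, then Q(T) ∈ K[T;σ]·P(T). -/
/-! Right evaluation is multiplicative up to a twist: `(P·Q)(b) = P(σ(e)·b·e⁻¹)·e` with
`e = Q(b) ≠ 0`, and `(P·Q)(b) = 0` when `Q(b) = 0`. Hence if a nonzero `D = Q·(T - c)` vanishes at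
points `aᵢ ≠ c`, then `Q` vanishes at σ-conjugates of the `aᵢ`, which stay pairwise non-conjugate;
by induction, a nonzero skew polynomial vanishing at `m` pairwise non-σ-conjugate points has degree
at least `m`. Left multiplication by suitable linear factors gives a monic `P` of degree `n`
vanishing at all `aᵢ`. Any further root `b` would leave, after dividing `P` by `T - b`, a
polynomial of degree `n - 1` vanishing at `n` pairwise non-conjugate points. Uniqueness and
divisibility follow by applying the degree bound to a difference of two such `P` and to the
remainder of right division by `P`. -/

open Polynomial

variable {K : Type*} [Field K]

/-- `skewN σ i a = σ^{i-1}(a)⋯σ(a)·a`, with `skewN σ 0 a = 1`. -/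
def skewN (σ : K →+* K) : ℕ → K → K
  | 0, _ => 1
  | i + 1, a => σ (skewN σ i a) * a

/-- Right evaluation of a skew polynomial `P = Σ aᵢ Tⁱ` at `a`: `P(a) = Σ aᵢ Nᵢ(a)`. -/
noncomputable def skewEval (σ : K →+* K) (P : Polynomial K) (a : K) : K :=
  ∑ i ∈ P.support, P.coeff i * skewN σ i a

/-- Multiplication in the skew polynomial ring `K[T;σ]` (with `T·a = σ(a)·T`),
using `Polynomial K` as the carrier of coefficient sequences. -/
noncomputable def skewMul (σ : K →+* K) (P Q : Polynomial K) : Polynomial K :=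
  ∑ i ∈ P.support, ∑ j ∈ Q.support,
    Polynomial.C (P.coeff i * (⇑σ)^[i] (Q.coeff j)) * Polynomial.X ^ (i + j)

/-- `a` and `b` are σ-conjugate: `a = σ(x)·b·x⁻¹` for some nonzero `x`. -/
def SkewConjugate (σ : K →+* K) (a b : K) : Prop :=
  ∃ x : K, x ≠ 0 ∧ a = σ x * b * x⁻¹

section SkewPolynomial

variable {σ : K →+* K}

theorem skewN_add (i j : ℕ) (b : K) :
    skewN σ (i + j) b = (⇑σ)^[i] (skewN σ j b) * skewN σ i b := by
  induction i with
  | zero => simp [skewN]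
  | succ i ih =>
    rw [Nat.succ_add, skewN, ih, map_mul, skewN, Function.iterate_succ_apply', mul_assoc]

theorem skewN_conj (i : ℕ) {x : K} (hx : x ≠ 0) (b : K) :
    skewN σ i (σ x * b * x⁻¹) = (⇑σ)^[i] x * skewN σ i b * x⁻¹ := by
  induction i with
  | zero => simp [skewN, mul_inv_cancel₀ hx]
  | succ i ih =>
    have hσx : σ x ≠ 0 := (map_ne_zero σ).2 hx
    rw [skewN, ih, skewN, Function.iterate_succ_apply', map_mul, map_mul, map_inv₀]
    field_simp

variable (σ) in
noncomputable def skewEvalLinear (b : K) : K[X] →ₗ[K] K :=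
  lsum fun i => LinearMap.mulRight K (skewN σ i b)

theorem skewEval_add (P Q : K[X]) (b : K) :
    skewEval σ (P + Q) b = skewEval σ P b + skewEval σ Q b :=
  map_add (skewEvalLinear σ b) P Q

theorem skewEval_sub (P Q : K[X]) (b : K) :
    skewEval σ (P - Q) b = skewEval σ P b - skewEval σ Q b :=
  map_sub (skewEvalLinear σ b) P Q

theorem skewEval_sum {ι : Type*} (s : Finset ι) (f : ι → K[X]) (b : K) :
    skewEval σ (∑ i ∈ s, f i) b = ∑ i ∈ s, skewEval σ (f i) b :=
  map_sum (skewEvalLinear σ b) f s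

theorem skewEval_C_mul_X_pow (c : K) (k : ℕ) (b : K) :
    skewEval σ (C c * X ^ k) b = c * skewN σ k b := by
  rw [C_mul_X_pow_eq_monomial]
  exact sum_monomial_index c (fun i x => x * skewN σ i b) (zero_mul _)

theorem skewEval_C (c b : K) : skewEval σ (C c) b = c := by
  simpa [skewN] using skewEval_C_mul_X_pow (σ := σ) c 0 b

theorem skewEval_X_sub_C (c b : K) : skewEval σ (X - C c) b = b - c := by
  rw [skewEval_sub, skewEval_C, ← one_mul X, ← C_1, ← pow_one X, skewEval_C_mul_X_pow]
  simp [skewN]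

theorem skewMul_eq_sum (P Q : K[X]) :
    skewMul σ P Q = P.sum fun i p => Q.sum fun j q => monomial (i + j) (p * (⇑σ)^[i] q) := by
  simp only [skewMul, Polynomial.sum_def, C_mul_X_pow_eq_monomial]

theorem skewMul_zero_left (Q : K[X]) : skewMul σ 0 Q = 0 := by
  simp [skewMul]

theorem skewMul_add_left (P P' Q : K[X]) :
    skewMul σ (P + P') Q = skewMul σ P Q + skewMul σ P' Q := by
  simp only [skewMul_eq_sum]
  refine sum_add_index P P' _ (fun i => ?_) (fun i p p' => ?_)
  · simp [Polynomial.sum_def]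
  · simp only [Polynomial.sum_def, ← Finset.sum_add_distrib, add_mul, map_add]

theorem natDegree_skewMul_le (P Q : K[X]) :
    (skewMul σ P Q).natDegree ≤ P.natDegree + Q.natDegree :=
  natDegree_sum_le_of_forall_le _ _ fun i hi => natDegree_sum_le_of_forall_le _ _ fun j hj =>
    (natDegree_C_mul_X_pow_le _ _).trans
      (add_le_add (le_natDegree_of_mem_supp i hi) (le_natDegree_of_mem_supp j hj))

theorem coeff_skewMul_natDegree_add (P Q : K[X]) :
    (skewMul σ P Q).coeff (P.natDegree + Q.natDegree) =
      P.leadingCoeff * (⇑σ)^[P.natDegree] Q.leadingCoeff := by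
  rcases eq_or_ne P 0 with rfl | hP
  · simp [skewMul]
  rcases eq_or_ne Q 0 with rfl | hQ
  · simp [skewMul]
  simp only [skewMul, finsetSum_coeff, coeff_C_mul_X_pow]
  rw [Finset.sum_eq_single_of_mem _ (natDegree_mem_support_of_nonzero hP) fun i hi hiP => ?_,
    Finset.sum_eq_single_of_mem _ (natDegree_mem_support_of_nonzero hQ) fun j hj hjQ => ?_,
    if_pos rfl]
  · rfl
  · have := le_natDegree_of_mem_supp j hj
    rw [if_neg (by omega)]
  · refine Finset.sum_eq_zero fun j hj => if_neg ?_
    have := le_natDegree_of_mem_supp i hi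
    have := le_natDegree_of_mem_supp j hj
    omega

theorem iterate_map_ne_zero (k : ℕ) {x : K} (hx : x ≠ 0) : (⇑σ)^[k] x ≠ 0 := by
  rw [← RingHom.coe_pow]
  exact (_root_.map_ne_zero _).2 hx

theorem natDegree_skewMul {P Q : K[X]} (hP : P ≠ 0) (hQ : Q ≠ 0) :
    (skewMul σ P Q).natDegree = P.natDegree + Q.natDegree :=
  natDegree_eq_of_le_of_coeff_ne_zero (natDegree_skewMul_le P Q) <| by
    rw [coeff_skewMul_natDegree_add]
    exact mul_ne_zero (leadingCoeff_ne_zero.2 hP) (iterate_map_ne_zero _ (leadingCoeff_ne_zero.2 hQ))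

theorem leadingCoeff_skewMul {P Q : K[X]} (hP : P ≠ 0) (hQ : Q ≠ 0) :
    (skewMul σ P Q).leadingCoeff = P.leadingCoeff * (⇑σ)^[P.natDegree] Q.leadingCoeff := by
  rw [leadingCoeff, natDegree_skewMul hP hQ, coeff_skewMul_natDegree_add]

theorem Polynomial.Monic.skewMul {P Q : K[X]} (hP : P.Monic) (hQ : Q.Monic) :
    (skewMul σ P Q).Monic := by
  rw [Monic, leadingCoeff_skewMul hP.ne_zero hQ.ne_zero, hP.leadingCoeff, hQ.leadingCoeff,
    iterate_map_one, one_mul]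

theorem skewEval_skewMul (P Q : K[X]) (b : K) :
    skewEval σ (skewMul σ P Q) b =
      ∑ i ∈ P.support, P.coeff i * (⇑σ)^[i] (skewEval σ Q b) * skewN σ i b := by
  simp only [skewMul, skewEval_sum, skewEval_C_mul_X_pow]
  refine Finset.sum_congr rfl fun i _ => ?_
  rw [skewEval, ← RingHom.coe_pow, map_sum, Finset.mul_sum, Finset.sum_mul]
  refine Finset.sum_congr rfl fun j _ => ?_
  rw [skewN_add, map_mul, RingHom.coe_pow]
  ring

theorem skewEval_skewMul_of_skewEval_eq_zero (P : K[X]) {Q : K[X]} {b : K}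
    (h : skewEval σ Q b = 0) : skewEval σ (skewMul σ P Q) b = 0 := by
  simp [skewEval_skewMul, h]

theorem skewEval_skewMul_of_skewEval_ne_zero (P : K[X]) {Q : K[X]} {b : K}
    (h : skewEval σ Q b ≠ 0) :
    skewEval σ (skewMul σ P Q) b =
      skewEval σ P (σ (skewEval σ Q b) * b * (skewEval σ Q b)⁻¹) * skewEval σ Q b := by
  rw [skewEval_skewMul, skewEval.eq_1 σ P, Finset.sum_mul]
  refine Finset.sum_congr rfl fun i _ => ?_
  rw [skewN_conj i h]
  field_simp

theorem skewEval_skewMul_X_sub_C (Q : K[X]) {b c : K} (hbc : b ≠ c) :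
    skewEval σ (skewMul σ Q (X - C c)) b =
      skewEval σ Q (σ (b - c) * b * (b - c)⁻¹) * (b - c) := by
  rw [skewEval_skewMul_of_skewEval_ne_zero Q (by rwa [skewEval_X_sub_C, sub_ne_zero]),
    skewEval_X_sub_C]

theorem natDegree_skewMul_X_sub_C {Q : K[X]} (hQ : Q ≠ 0) (c : K) :
    (skewMul σ Q (X - C c)).natDegree = Q.natDegree + 1 := by
  rw [natDegree_skewMul hQ (X_sub_C_ne_zero c), natDegree_X_sub_C]

theorem exists_eq_skewMul_add_of_monic {P : K[X]} (hP : P.Monic) (Q : K[X]) :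
    ∃ R S, Q = skewMul σ R P + S ∧ S.degree < P.degree := by
  induction hn : Q.natDegree using Nat.strong_induction_on generalizing Q with
  | _ n ih =>
  by_cases hlt : Q.degree < P.degree
  · exact ⟨0, Q, by rw [skewMul_zero_left, zero_add], hlt⟩
  have hQ : Q ≠ 0 := by
    rintro rfl
    exact hlt (bot_lt_iff_ne_bot.2 (degree_ne_bot.2 hP.ne_zero))
  have hle : P.natDegree ≤ Q.natDegree := natDegree_le_natDegree (not_lt.1 hlt)
  set M := monomial (Q.natDegree - P.natDegree) Q.leadingCoeff
  have hM : M ≠ 0 := by simpa [M] using hQ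
  have hlc : (skewMul σ M P).leadingCoeff = Q.leadingCoeff := by
    rw [leadingCoeff_skewMul hM hP.ne_zero, hP.leadingCoeff, iterate_map_one, mul_one,
      leadingCoeff_monomial]
  have hdeg : (skewMul σ M P).degree = Q.degree := by
    rw [degree_eq_natDegree hQ, degree_eq_natDegree (leadingCoeff_ne_zero.1 (hlc ▸
      leadingCoeff_ne_zero.2 hQ)), natDegree_skewMul hM hP.ne_zero, natDegree_monomial_eq _
      (leadingCoeff_ne_zero.2 hQ), Nat.sub_add_cancel hle]
  obtain ⟨R, S, hRS, hS⟩ : ∃ R S, Q - skewMul σ M P = skewMul σ R P + S ∧ S.degree < P.degree := by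
    by_cases h0 : Q - skewMul σ M P = 0
    · exact ⟨0, 0, by rw [h0, skewMul_zero_left, add_zero],
        bot_lt_iff_ne_bot.2 (degree_ne_bot.2 hP.ne_zero)⟩
    · exact ih _ (hn ▸ natDegree_lt_natDegree h0 (degree_sub_lt_left hdeg.symm hQ hlc.symm)) _ rfl
  exact ⟨R + M, S, by rw [skewMul_add_left]; linear_combination hRS, hS⟩

theorem exists_eq_skewMul_X_sub_C {D : K[X]} {c : K} (h : skewEval σ D c = 0) :
    ∃ Q, D = skewMul σ Q (X - C c) := by
  obtain ⟨Q, S, hD, hS⟩ := exists_eq_skewMul_add_of_monic (monic_X_sub_C c) D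
  rw [degree_X_sub_C, Nat.WithBot.lt_one_iff_le_zero] at hS
  have hS0 : S.coeff 0 = 0 := by
    rwa [hD, skewEval_add, skewEval_skewMul_of_skewEval_eq_zero Q (by rw [skewEval_X_sub_C,
      sub_self]), zero_add, eq_C_of_degree_le_zero hS, skewEval_C] at h
  exact ⟨Q, by rw [hD, eq_C_of_degree_le_zero hS, hS0, C_0, add_zero]⟩

variable (σ) in
theorem skewConjugate_equivalence : Equivalence (SkewConjugate σ) where
  refl a := ⟨1, one_ne_zero, by simp⟩
  symm := by
    rintro a b ⟨x, hx, rfl⟩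
    refine ⟨x⁻¹, inv_ne_zero hx, ?_⟩
    have hσx : σ x ≠ 0 := (_root_.map_ne_zero σ).2 hx
    rw [map_inv₀, inv_inv]
    field_simp
  trans := by
    rintro a b c ⟨x, hx, rfl⟩ ⟨y, hy, rfl⟩
    refine ⟨x * y, mul_ne_zero hx hy, ?_⟩
    rw [map_mul, mul_inv]
    ring

theorem Pairwise.not_skewConjugate_of_skewConjugate {ι : Type*} {a a' : ι → K}
    (ha : Pairwise fun i j => ¬SkewConjugate σ (a i) (a j))
    (h : ∀ i, SkewConjugate σ (a' i) (a i)) :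
    Pairwise fun i j => ¬SkewConjugate σ (a' i) (a' j) := fun i j hij hc =>
  let e := skewConjugate_equivalence σ
  ha hij (e.trans (e.trans (e.symm (h i)) hc) (h j))

theorem exists_skewMul_X_sub_C_eq_of_skewEval_eq_zero {ι : Type*} {D : K[X]} (hD : D ≠ 0) {c : K}
    (hc : skewEval σ D c = 0) (a : ι → K) (ha : Pairwise fun i j => ¬SkewConjugate σ (a i) (a j))
    (hac : ∀ i, a i ≠ c) (hroot : ∀ i, skewEval σ D (a i) = 0) :
    ∃ Q ≠ 0, D.natDegree = Q.natDegree + 1 ∧ ∃ a' : ι → K,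
      (Pairwise fun i j => ¬SkewConjugate σ (a' i) (a' j)) ∧ ∀ i, skewEval σ Q (a' i) = 0 := by
  obtain ⟨Q, rfl⟩ := exists_eq_skewMul_X_sub_C hc
  have hQ : Q ≠ 0 := by
    rintro rfl
    exact hD (skewMul_zero_left _)
  have hac' (i : ι) : a i - c ≠ 0 := sub_ne_zero.2 (hac i)
  refine ⟨Q, hQ, natDegree_skewMul_X_sub_C hQ c, fun i => σ (a i - c) * a i * (a i - c)⁻¹,
    ha.not_skewConjugate_of_skewConjugate fun i => ⟨_, hac' i, rfl⟩, fun i => ?_⟩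
  have := hroot i
  rw [skewEval_skewMul_X_sub_C Q (hac i)] at this
  exact (mul_eq_zero.1 this).resolve_right (hac' i)

theorem card_le_natDegree_of_skewEval_eq_zero {m : ℕ} (a : Fin m → K)
    (ha : Pairwise fun i j => ¬SkewConjugate σ (a i) (a j)) {D : K[X]} (hD : D ≠ 0)
    (hroot : ∀ i, skewEval σ D (a i) = 0) : m ≤ D.natDegree := by
  induction m generalizing D with
  | zero => exact Nat.zero_le _
  | succ m ih =>
    have hne (i : Fin m) : a i.castSucc ≠ a (Fin.last m) := fun h =>
      ha (Fin.castSucc_lt_last i).ne (h ▸ (skewConjugate_equivalence σ).refl _)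
    obtain ⟨Q, hQ, hdeg, a', ha', hroot'⟩ := exists_skewMul_X_sub_C_eq_of_skewEval_eq_zero hD
      (hroot (Fin.last m)) (fun i : Fin m => a i.castSucc)
      (ha.comp_of_injective (Fin.castSucc_injective m)) hne fun i => hroot (Fin.castSucc i)
    exact hdeg ▸ Nat.succ_le_succ (ih a' ha' hQ hroot')

theorem eq_zero_of_degree_lt_of_skewEval_eq_zero {m : ℕ} (a : Fin m → K)
    (ha : Pairwise fun i j => ¬SkewConjugate σ (a i) (a j)) {D : K[X]} (hdeg : D.degree < m)
    (hroot : ∀ i, skewEval σ D (a i) = 0) : D = 0 := by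
  by_contra hD
  have := card_le_natDegree_of_skewEval_eq_zero a ha hD hroot
  rw [degree_eq_natDegree hD, Nat.cast_lt] at hdeg
  omega

theorem exists_eq_of_skewEval_eq_zero {n : ℕ} (a : Fin n → K)
    (ha : Pairwise fun i j => ¬SkewConjugate σ (a i) (a j)) {P : K[X]} (hP : P ≠ 0)
    (hdeg : P.natDegree ≤ n) (hroot : ∀ i, skewEval σ P (a i) = 0) {b : K}
    (hb : skewEval σ P b = 0) : ∃ i, b = a i := by
  by_contra! hne
  obtain ⟨Q, hQ, hPQ, a', ha', hroot'⟩ := exists_skewMul_X_sub_C_eq_of_skewEval_eq_zero hP hb a ha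
    (fun i h => hne i h.symm) hroot
  have := card_le_natDegree_of_skewEval_eq_zero a' ha' hQ hroot'
  omega

theorem skewEval_skewMul_X_sub_C_conj_self (P : K[X]) (b : K) :
    skewEval σ (skewMul σ (X - C (σ (skewEval σ P b) * b * (skewEval σ P b)⁻¹)) P) b = 0 := by
  by_cases h : skewEval σ P b = 0
  · exact skewEval_skewMul_of_skewEval_eq_zero _ h
  · rw [skewEval_skewMul_of_skewEval_ne_zero _ h, skewEval_X_sub_C, sub_self, zero_mul]

variable (σ) in
theorem exists_monic_natDegree_eq_skewEval_eq_zero {n : ℕ} (a : Fin n → K) :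
    ∃ P : K[X], P.Monic ∧ P.natDegree = n ∧ ∀ i, skewEval σ P (a i) = 0 := by
  induction n with
  | zero => exact ⟨1, monic_one, natDegree_one, fun i => i.elim0⟩
  | succ n ih =>
    obtain ⟨P, hPm, hPd, hP⟩ := ih fun i => a i.castSucc
    set e := skewEval σ P (a (Fin.last n))
    refine ⟨skewMul σ (X - C (σ e * a (Fin.last n) * e⁻¹)) P, (monic_X_sub_C _).skewMul hPm, ?_,
      Fin.lastCases (skewEval_skewMul_X_sub_C_conj_self P _) fun i =>
        skewEval_skewMul_of_skewEval_eq_zero _ (hP i)⟩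
    rw [natDegree_skewMul (X_sub_C_ne_zero _) hPm.ne_zero, natDegree_X_sub_C, hPd, add_comm]

end SkewPolynomial

/-- Bray–Whaples for skew polynomials: if `a₁, …, aₙ` are mutually non-σ-conjugate, there is a
unique monic skew polynomial of degree `n` whose right roots are exactly `a₁, …, aₙ`; moreover any
skew polynomial vanishing at all the `aᵢ` is a left multiple of it. -/
theorem stmt_1 {K : Type*} [Field K] (σ : K →+* K) {n : ℕ} (a : Fin n → K)
    (hna : ∀ i j : Fin n, i ≠ j → ¬ SkewConjugate σ (a i) (a j)) :
    (∃! P : Polynomial K, P.Monic ∧ P.natDegree = n ∧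
        (∀ b : K, skewEval σ P b = 0 ↔ ∃ i, b = a i)) ∧
    (∀ P : Polynomial K, (P.Monic ∧ P.natDegree = n ∧
        (∀ b : K, skewEval σ P b = 0 ↔ ∃ i, b = a i)) →
      ∀ Q : Polynomial K, (∀ i, skewEval σ Q (a i) = 0) →
        ∃ R : Polynomial K, Q = skewMul σ R P) := by
  obtain ⟨P, hPm, hPd, hP⟩ := exists_monic_natDegree_eq_skewEval_eq_zero σ a
  have hroots (b : K) : skewEval σ P b = 0 ↔ ∃ i, b = a i :=
    ⟨exists_eq_of_skewEval_eq_zero a hna hPm.ne_zero hPd.le hP, by rintro ⟨i, rfl⟩; exact hP i⟩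
  refine ⟨⟨P, ⟨hPm, hPd, hroots⟩, fun P' ⟨hm', hd', hr'⟩ => ?_⟩, fun P' ⟨hm', hd', hr'⟩ Q hQ => ?_⟩
  · have hdeg' : P'.degree = n := by rw [degree_eq_natDegree hm'.ne_zero, hd']
    refine sub_eq_zero.1 (eq_zero_of_degree_lt_of_skewEval_eq_zero a hna ?_ fun i => ?_)
    · refine hdeg' ▸ degree_sub_lt_left ?_ hm'.ne_zero (by rw [hm'.leadingCoeff, hPm.leadingCoeff])
      rw [hdeg', degree_eq_natDegree hPm.ne_zero, hPd]
    · rw [skewEval_sub, (hr' _).2 ⟨i, rfl⟩, hP i, sub_self]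
  · obtain ⟨R, S, hQRS, hS⟩ := exists_eq_skewMul_add_of_monic hm' Q
    have hS0 : S = 0 := by
      refine eq_zero_of_degree_lt_of_skewEval_eq_zero a hna ?_ fun i => ?_
      · rwa [degree_eq_natDegree hm'.ne_zero, hd'] at hS
      · rw [eq_sub_of_add_eq' hQRS.symm, skewEval_sub, hQ i,
          skewEval_skewMul_of_skewEval_eq_zero R ((hr' _).2 ⟨i, rfl⟩), sub_zero]
    exact ⟨R, by rw [hQRS, hS0, add_zero]⟩
end

section
/- Let (K, σ) be a σ-field and let S = {a_1, …, a_n} ⊆ K be a P-independent set of n distinct elements with minimal polynomial P_S(T) = Σ_{i=0}^n b_i T^i ∈ K[T;σ] (so b_n = 1). Then for each 0 ≤ i ≤ n, b_i = ((−1)^{n+i} / det(V^σ(a_1,…,a_n))) · det(M_i), where M_i is the n×n matrix obtained from the (n+1)×n matrix (N_j(a_k))_{0 ≤ j ≤ n, 1 ≤ k ≤ n} by deleting the row of index i. Moreover, the constant term satisfies b_0 = (−1)^n · (σ(det(V^σ(a_1,…,a_n))) / det(V^σ(a_1,…,a_n))) · a_1 a_2 ⋯ a_n. -/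
/-!
The coefficient vector `b` of `P_S` is a left kernel vector of the `(n+1) × n` matrix
`A = (N_j(a_k))`, normalised by `b_n = 1`. Border `A` with the unit column `e_i`: expanding along
that column gives `(-1)^(i+n) det M_i`, while replacing the last row by `∑ b_j • row_j` (which does
not change the determinant) leaves the row `(0, …, 0, b_i)` and gives `b_i det V`.
`det V ≠ 0`, since a left kernel vector of `V` would be the coefficients of a nonzero skew
polynomial of degree `< n` vanishing on `S`, which cannot be a left multiple of `P_S`.
For `b_0`: deleting row `0` from `A` leaves `(σ(N_j(a_k)) a_k) = σ(V) · diag(a)`.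
-/

open Polynomial

variable {K : Type*} [Field K]

/-- `P` vanishes (right-evaluates to `0`) on the set `S`. -/
def SkewVanishes (σ : K →+* K) (P : Polynomial K) (S : Set K) : Prop :=
  ∀ x ∈ S, skewEval σ P x = 0

/-- `P` is the minimal skew polynomial of `S`: monic, vanishing on `S`, and every skew
polynomial vanishing on `S` is a left multiple of `P` in `K[T;σ]`. -/
def IsMinSkewPoly (σ : K →+* K) (P : Polynomial K) (S : Set K) : Prop :=
  P.Monic ∧ SkewVanishes σ P S ∧
    ∀ Q : Polynomial K, SkewVanishes σ Q S → ∃ R : Polynomial K, Q = skewMul σ R P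

/-- `S` is P-independent: no `a ∈ S` is a right root of the minimal skew polynomial of
`S \ {a}`. -/
def PIndependent (σ : K →+* K) (S : Set K) : Prop :=
  ∀ a ∈ S, ∀ P : Polynomial K, IsMinSkewPoly σ P (S \ {a}) → skewEval σ P a ≠ 0

/-- The σ-Vandermonde matrix: entry in row `i`, column `j` is `N_i(a_j)`. -/
noncomputable def skewVandermonde (σ : K →+* K) {n : ℕ} (a : Fin n → K) :
    Matrix (Fin n) (Fin n) K :=
  Matrix.of fun i j => skewN σ (i : ℕ) (a j)

open Matrix

section AppendColumn

variable {R : Type*} [CommRing R] {n : ℕ}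

lemma det_of_snoc_eq_sum (A : Matrix (Fin (n + 1)) (Fin n) R) (v : Fin (n + 1) → R) :
    (Matrix.of fun j => Fin.snoc (A j) (v j)).det =
      ∑ j : Fin (n + 1), (-1) ^ ((j : ℕ) + n) * v j * (A.submatrix j.succAbove id).det := by
  rw [det_succ_column _ (Fin.last n)]
  refine Finset.sum_congr rfl fun j _ => ?_
  simp only [Fin.val_last, of_apply, Fin.snoc_last, Fin.succAbove_last]
  congr 2
  ext k l
  simp

lemma det_of_snoc_eq_dotProduct_mul (A : Matrix (Fin (n + 1)) (Fin n) R) (v b : Fin (n + 1) → R)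
    (hb : b (Fin.last n) = 1) (hbA : b ᵥ* A = 0) :
    (Matrix.of fun j => Fin.snoc (A j) (v j)).det = (b ⬝ᵥ v) * (A.submatrix Fin.castSucc id).det := by
  set B : Matrix (Fin (n + 1)) (Fin (n + 1)) R := Matrix.of fun j => Fin.snoc (A j) (v j)
  have hrow : ∑ j, b j • B j = Fin.snoc (b ᵥ* A) (b ⬝ᵥ v) := by
    ext k
    refine Fin.lastCases ?_ (fun l => ?_) k <;>
      simp [B, Finset.sum_apply, vecMul, dotProduct, mul_comm]
  rw [← one_smul R B.det, ← hb, ← det_updateRow_sum, hrow, hbA, det_succ_row _ (Fin.last n),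
    Fin.sum_univ_castSucc]
  simp only [updateRow_self, Fin.snoc_castSucc, Pi.zero_apply, mul_zero, zero_mul,
    Finset.sum_const_zero, zero_add, Fin.snoc_last, Fin.val_last, Fin.succAbove_last]
  rw [← two_mul, pow_mul, neg_one_sq, one_pow, one_mul]
  congr 2
  ext k l
  simp [B]

lemma mul_det_submatrix_castSucc_of_vecMul_eq_zero (A : Matrix (Fin (n + 1)) (Fin n) R)
    (b : Fin (n + 1) → R) (hb : b (Fin.last n) = 1) (hbA : b ᵥ* A = 0) (i : Fin (n + 1)) :
    b i * (A.submatrix Fin.castSucc id).det =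
      (-1) ^ ((i : ℕ) + n) * (A.submatrix i.succAbove id).det := by
  have h := (det_of_snoc_eq_sum A (Pi.single i 1)).symm.trans
    (det_of_snoc_eq_dotProduct_mul A (Pi.single i 1) b hb hbA)
  rw [Fintype.sum_eq_single i fun j hj => by simp [hj]] at h
  simpa using h.symm

end AppendColumn

def skewNMatrix (σ : K →+* K) (m : ℕ) {n : ℕ} (a : Fin n → K) : Matrix (Fin m) (Fin n) K :=
  Matrix.of fun j k => skewN σ j (a k)

lemma skewEval_eq_vecMul_skewNMatrix (σ : K →+* K) {m n : ℕ} (a : Fin n → K) {P : K[X]}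
    (hP : P.degree < m) (k : Fin n) :
    skewEval σ P (a k) = ((fun j : Fin m => P.coeff j) ᵥ* skewNMatrix σ m a) k := by
  change P.sum (fun i c => c * skewN σ i (a k)) = _
  rw [← sum_fin (fun i c => c * skewN σ i (a k)) (fun _ => zero_mul _) hP]
  rfl

lemma coeff_skewMul_natDegree_add_natDegree (σ : K →+* K) (R P : K[X]) :
    (skewMul σ R P).coeff (R.natDegree + P.natDegree) =
      R.leadingCoeff * σ^[R.natDegree] P.leadingCoeff := by
  simp only [skewMul, finsetSum_coeff, coeff_C_mul_X_pow]
  rw [Finset.sum_eq_single R.natDegree, Finset.sum_eq_single P.natDegree]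
  · rw [if_pos rfl, coeff_natDegree, coeff_natDegree]
  · intro j hj hjP
    have := le_natDegree_of_mem_supp j hj
    rw [if_neg (by omega)]
  · intro hP
    simp [notMem_support_iff.mp hP]
  · intro i hi hiR
    refine Finset.sum_eq_zero fun j hj => ?_
    have := le_natDegree_of_mem_supp i hi
    have := le_natDegree_of_mem_supp j hj
    rw [if_neg (by omega)]
  · intro hR
    simp [notMem_support_iff.mp hR]

lemma IsMinSkewPoly.eq_zero_of_degree_lt {σ : K →+* K} {P Q : K[X]} {S : Set K}
    (hP : IsMinSkewPoly σ P S) (hQ : SkewVanishes σ Q S) (hdeg : Q.degree < P.natDegree) :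
    Q = 0 := by
  obtain ⟨R, rfl⟩ := hP.2.2 Q hQ
  by_cases hR : R = 0
  · simp [hR, skewMul]
  have hlead := coeff_skewMul_natDegree_add_natDegree σ R P
  rw [hP.1.leadingCoeff, iterate_map_one, mul_one,
    coeff_eq_zero_of_degree_lt (hdeg.trans_le (by exact_mod_cast Nat.le_add_left _ _))] at hlead
  exact absurd hlead.symm (leadingCoeff_ne_zero.mpr hR)

lemma IsMinSkewPoly.det_skewVandermonde_ne_zero {σ : K →+* K} {n : ℕ} {a : Fin n → K} {P : K[X]}
    (hP : IsMinSkewPoly σ P (Set.range a)) (hdeg : P.natDegree = n) :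
    (skewVandermonde σ a).det ≠ 0 := by
  intro h0
  obtain ⟨c, hc, hcV⟩ := exists_vecMul_eq_zero_iff.mpr h0
  set Q : K[X] := ((degreeLTEquiv K n).symm c).1
  have hQdeg : Q.degree < n := mem_degreeLT.mp (Subtype.prop _)
  have hQc : (fun j : Fin n => Q.coeff j) = c := (degreeLTEquiv K n).apply_symm_apply c
  have hvan : SkewVanishes σ Q (Set.range a) := by
    rintro _ ⟨k, rfl⟩
    rw [skewEval_eq_vecMul_skewNMatrix σ a hQdeg, hQc]
    exact congrFun hcV k
  have hQ0 := hP.eq_zero_of_degree_lt hvan (hdeg ▸ hQdeg)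
  apply hc
  rw [← hQc, hQ0]
  rfl

lemma det_skewNMatrix_submatrix_succAbove_zero (σ : K →+* K) {n : ℕ} (a : Fin n → K) :
    ((skewNMatrix σ (n + 1) a).submatrix (Fin.succAbove 0) id).det =
      σ (skewVandermonde σ a).det * ∏ i, a i := by
  have h : (skewNMatrix σ (n + 1) a).submatrix (Fin.succAbove 0) id =
      (skewVandermonde σ a).map σ * diagonal a := by
    ext j k
    simp [skewNMatrix, skewVandermonde, skewN]
  rw [h, det_mul, det_diagonal, ← RingHom.mapMatrix_apply, ← RingHom.map_det]

theorem stmt_4_general {K : Type*} [Field K] (σ : K →+* K) {n : ℕ} (a : Fin n → K)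
    (PS : Polynomial K) (hPS : IsMinSkewPoly σ PS (Set.range a))
    (hdeg : PS.natDegree = n) :
    (∀ i : Fin (n + 1), PS.coeff (i : ℕ) =
      (-1 : K) ^ (n + (i : ℕ)) / (skewVandermonde σ a).det *
        (Matrix.of fun (j k : Fin n) => skewN σ ((i.succAbove j : Fin (n + 1)) : ℕ) (a k)).det) ∧
    PS.coeff 0 = (-1 : K) ^ n *
      (σ ((skewVandermonde σ a).det) / (skewVandermonde σ a).det) * ∏ i, a i := by
  have hdet := hPS.det_skewVandermonde_ne_zero hdeg
  have hlast : PS.coeff n = 1 := hdeg ▸ hPS.1.coeff_natDegree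
  have hker : (fun j : Fin (n + 1) => PS.coeff j) ᵥ* skewNMatrix σ (n + 1) a = 0 := by
    have hPSdeg : PS.degree < ↑(n + 1) :=
      degree_le_natDegree.trans_lt (by rw [hdeg]; exact_mod_cast n.lt_succ_self)
    funext k
    rw [← skewEval_eq_vecMul_skewNMatrix σ a hPSdeg]
    exact hPS.2.1 _ ⟨k, rfl⟩
  have hcoeff : ∀ i : Fin (n + 1), PS.coeff (i : ℕ) = (-1 : K) ^ (n + (i : ℕ)) /
      (skewVandermonde σ a).det * ((skewNMatrix σ (n + 1) a).submatrix i.succAbove id).det := by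
    intro i
    rw [div_mul_eq_mul_div, eq_div_iff hdet, add_comm n (i : ℕ)]
    exact mul_det_submatrix_castSucc_of_vecMul_eq_zero _ _ hlast hker i
  refine ⟨hcoeff, ?_⟩
  have hcoeff0 := hcoeff 0
  rw [Fin.val_zero, add_zero, det_skewNMatrix_submatrix_succAbove_zero] at hcoeff0
  rw [hcoeff0]
  ring

/-- Vieta-type formulas: the coefficients `bᵢ` of the minimal skew polynomial
`P_S = Σ bᵢ Tⁱ` (monic of degree `n`) of a P-independent set `S = {a₁,…,aₙ}` of distinct
elements are given by `bᵢ = (−1)^{n+i}·det(Mᵢ)/det V^σ(a₁,…,aₙ)`, where `Mᵢ` deletes the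
row of index `i` from the `(n+1)×n` matrix `(N_j(a_k))`; moreover
`b₀ = (−1)ⁿ·(σ(det V)/det V)·a₁⋯aₙ`. -/
theorem stmt_4 {K : Type*} [Field K] (σ : K →+* K) {n : ℕ} (a : Fin n → K)
    (hinj : Function.Injective a) (hind : PIndependent σ (Set.range a))
    (PS : Polynomial K) (hPS : IsMinSkewPoly σ PS (Set.range a))
    (hdeg : PS.natDegree = n) :
    (∀ i : Fin (n + 1), PS.coeff (i : ℕ) =
      (-1 : K) ^ (n + (i : ℕ)) / (skewVandermonde σ a).det *
        (Matrix.of fun (j k : Fin n) => skewN σ ((i.succAbove j : Fin (n + 1)) : ℕ) (a k)).det) ∧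
    PS.coeff 0 = (-1 : K) ^ n *
      (σ ((skewVandermonde σ a).det) / (skewVandermonde σ a).det) * ∏ i, a i :=
  stmt_4_general σ a PS hPS hdeg
end

section
/- Let (L, σ) be a σ-extension of a σ-field (K, σ) and let a ∈ L. The following are equivalent: (1) a is σ-algebraic over K; (2) the K-vector subspace of L spanned by the elements N_i(a), i ≥ 0, is finite-dimensional; (3) there exists a finite-dimensional K-vector subspace V of L such that 1 ∈ V and a·σ(V) ⊆ V. -/
/-!
The map `v ↦ a * σ v` is σ-semilinear over `K` and sends `Nᵢ(a)` to `Nᵢ₊₁(a)`, so a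
finite-dimensional subspace containing `1` and stable under it contains every `Nᵢ(a)`.
Conversely, a nontrivial `K`-linear relation among the `Nᵢ(a)` is a skew polynomial vanishing
at `a`, and such a polynomial of degree `n` writes `Nₙ(a)` as a combination of
`N₀(a), …, Nₙ₋₁(a)`, whose span is therefore stable.
-/

open Polynomial

variable {K : Type*} [Field K]

/-- In a σ-extension `(L, σL)` of the σ-subfield `K`, the element `a` is σ-algebraic
over `K`: it is a right root of some nonzero skew polynomial with coefficients in `K`. -/
def IsSkewAlgebraic {L : Type*} [Field L] (σL : L →+* L) (K : Subfield L) (a : L) : Prop :=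
  ∃ P : Polynomial L, P ≠ 0 ∧ (∀ i, P.coeff i ∈ K) ∧ skewEval σL P a = 0

section

variable {L : Type*} [Field L] (σ : L →+* L)

theorem skewN_succ_eq_mul (i : ℕ) (a : L) : skewN σ (i + 1) a = a * σ (skewN σ i a) :=
  mul_comm _ _

theorem skewEval_eq_sum_of_support_subset (P : L[X]) (a : L) {s : Finset ℕ}
    (hs : P.support ⊆ s) : skewEval σ P a = ∑ i ∈ s, P.coeff i * skewN σ i a :=
  Finset.sum_subset hs fun i _ hi => by rw [notMem_support_iff.mp hi, zero_mul]

theorem skewN_mem_of_one_mem {R : Type*} [Semiring R] [Module R L] (V : Submodule R L) {a : L}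
    (h1 : (1 : L) ∈ V) (hV : ∀ v ∈ V, a * σ v ∈ V) (i : ℕ) : skewN σ i a ∈ V := by
  induction i with
  | zero => exact h1
  | succ i ih => rw [skewN_succ_eq_mul]; exact hV _ ih

variable (K : Subfield L)

theorem mul_map_mem_span_image (hK : ∀ x ∈ K, σ x ∈ K) (a : L) (S : Set L) {x : L}
    (hx : x ∈ Submodule.span K S) :
    a * σ x ∈ Submodule.span K ((fun s => a * σ s) '' S) := by
  induction hx using Submodule.span_induction with
  | mem y hy => exact Submodule.subset_span ⟨y, hy, rfl⟩
  | zero => simpa only [map_zero, mul_zero] using Submodule.zero_mem _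
  | add y z _ _ hy hz => simpa only [map_add, mul_add] using Submodule.add_mem _ hy hz
  | smul c y _ hy =>
    have hc : a * σ (c • y) = (⟨σ c, hK c c.2⟩ : K) • (a * σ y) := by
      change a * σ (c * y) = σ c * (a * σ y)
      rw [map_mul, mul_left_comm]
    exact hc ▸ Submodule.smul_mem _ _ hy

theorem skewN_natDegree_mem_span {P : L[X]} (hP : P ≠ 0) (hPK : ∀ i, P.coeff i ∈ K) {a : L}
    (hPa : skewEval σ P a = 0) :
    skewN σ P.natDegree a ∈ Submodule.span K ((skewN σ · a) '' Set.Iio P.natDegree) := by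
  set n := P.natDegree
  have hlead : (⟨P.coeff n, hPK n⟩ : K) ≠ 0 :=
    Subtype.coe_ne_coe.mp (leadingCoeff_ne_zero.mpr hP)
  have hsum : P.coeff n * skewN σ n a = -∑ i ∈ Finset.range n, P.coeff i * skewN σ i a := by
    rw [skewEval_eq_sum_of_support_subset σ P a supp_subset_range_natDegree_succ,
      Finset.sum_range_succ] at hPa
    exact eq_neg_of_add_eq_zero_right hPa
  refine (Submodule.smul_mem_iff _ hlead).mp ?_
  change P.coeff n * skewN σ n a ∈ _
  rw [hsum]
  refine Submodule.neg_mem _ (Submodule.sum_mem _ fun i hi => ?_)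
  exact Submodule.smul_mem _ (⟨P.coeff i, hPK i⟩ : K)
    (Submodule.subset_span ⟨i, Finset.mem_range.mp hi, rfl⟩)

theorem mul_map_mem_span_skewN_Iio (hK : ∀ x ∈ K, σ x ∈ K) {a : L} {n : ℕ}
    (hn : skewN σ n a ∈ Submodule.span K ((skewN σ · a) '' Set.Iio n)) :
    ∀ v ∈ Submodule.span K ((skewN σ · a) '' Set.Iio n),
      a * σ v ∈ Submodule.span K ((skewN σ · a) '' Set.Iio n) := by
  intro v hv
  refine Submodule.span_le.mpr ?_ (mul_map_mem_span_image σ K hK a _ hv)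
  rintro _ ⟨_, ⟨i, hi, rfl⟩, rfl⟩
  dsimp only
  rw [← skewN_succ_eq_mul]
  rcases (Nat.succ_le_of_lt hi).lt_or_eq with hlt | rfl
  · exact Submodule.subset_span ⟨i + 1, hlt, rfl⟩
  · exact hn

theorem one_mem_span_skewN_Iio {a : L} {n : ℕ}
    (hn : skewN σ n a ∈ Submodule.span K ((skewN σ · a) '' Set.Iio n)) :
    (1 : L) ∈ Submodule.span K ((skewN σ · a) '' Set.Iio n) := by
  cases n with
  | zero => exact hn
  | succ n => exact Submodule.subset_span ⟨0, n.succ_pos, rfl⟩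

theorem isSkewAlgebraic_of_not_linearIndependent {a : L}
    (h : ¬LinearIndependent K (skewN σ · a)) : IsSkewAlgebraic σ K a := by
  obtain ⟨s, g, hg, i₀, hi₀, hgi₀⟩ := not_linearIndependent_iff.mp h
  set P : L[X] := ∑ i ∈ s, monomial i (g i : L)
  have hcoeff (j : ℕ) : P.coeff j = if j ∈ s then (g j : L) else 0 := by
    simp only [P, finsetSum_coeff, coeff_monomial, Finset.sum_ite_eq']
  have hsupp : P.support ⊆ s := fun j hj => by
    by_contra hjs
    exact mem_support_iff.mp hj (by rw [hcoeff, if_neg hjs])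
  refine ⟨P, fun hP => hgi₀ ?_, fun j => ?_, ?_⟩
  · simpa [hcoeff, hi₀] using congrArg (coeff · i₀) hP
  · rw [hcoeff]; split_ifs
    exacts [(g j).2, K.zero_mem]
  · rw [skewEval_eq_sum_of_support_subset σ P a hsupp, ← hg]
    exact Finset.sum_congr rfl fun i hi => by rw [hcoeff, if_pos hi]; rfl

end

/-- Criterion for σ-algebraicity: `a` is σ-algebraic over `K` iff the `K`-span of the
`Nᵢ(a)` is finite-dimensional, iff some finite-dimensional `K`-subspace `V` of `L`
contains `1` and satisfies `a·σ(V) ⊆ V`. -/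
theorem stmt_5 {L : Type*} [Field L] (σL : L →+* L) (K : Subfield L)
    (hK : ∀ x ∈ K, σL x ∈ K) (a : L) :
    List.TFAE [
      IsSkewAlgebraic σL K a,
      FiniteDimensional K (Submodule.span K (Set.range fun i : ℕ => skewN σL i a)),
      ∃ V : Submodule K L, FiniteDimensional K V ∧ (1 : L) ∈ V ∧
        ∀ v ∈ V, a * σL v ∈ V] := by
  tfae_have 1 → 3 := by
    rintro ⟨P, hP, hPK, hPa⟩
    have hn := skewN_natDegree_mem_span σL K hP hPK hPa
    exact ⟨Submodule.span K ((skewN σL · a) '' Set.Iio P.natDegree),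
      FiniteDimensional.span_of_finite K ((Set.finite_Iio _).image _),
      one_mem_span_skewN_Iio σL K hn, mul_map_mem_span_skewN_Iio σL K hK hn⟩
  tfae_have 3 → 2 := by
    rintro ⟨V, hV, h1, hVa⟩
    have hle : Submodule.span K (Set.range fun i => skewN σL i a) ≤ V :=
      Submodule.span_le.mpr (Set.range_subset_iff.mpr (skewN_mem_of_one_mem σL V h1 hVa))
    exact Submodule.finiteDimensional_of_le hle
  tfae_have 2 → 1 := fun h =>
    isSkewAlgebraic_of_not_linearIndependent σL K fun hli =>
      Module.Finite.not_linearIndependent_of_infinite _ (linearIndependent_span hli)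
  tfae_finish
end

section
/- Every σ-field (K, σ) can be embedded as a σ-subfield into a 1-algebraically closed σ-field; that is, there exists a σ-field (L, σ_L) such that K is a subfield of L, σ_L restricts to σ on K, and every nonconstant skew polynomial in L[T;σ_L] has a right root in L. -/
open Polynomial

variable {K : Type*} [Field K]

universe u

/-- A σ-field: a field together with a ring endomorphism. -/
structure SigmaField : Type (u + 1) where
  carrier : Type u
  [field : Field carrier]
  sigma : carrier →+* carrier

attribute [instance] SigmaField.field

/-! If `b ≠ 0` satisfies the linear recurrence `∑ aᵢ σⁱ(b) = 0`, then `Nᵢ(σ b / b) = σⁱ(b) / b`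
shows that `σ b / b` is a right root of `P = ∑ aᵢ Tⁱ`. Polynomials with `P(0) = 0` have the root
`0`; for the others, adjoin to `K` a generic solution of the recurrence of each `P`: the fraction
field of `K[x_{P,j}]`, with `σ` extended by `x_{P,j} ↦ x_{P,j+1}` and the top `x_{P,n-1}` sent to
what the recurrence dictates. Since `P(0) ≠ 0` this substitution is invertible, so `σ` extends
to the fraction field. Iterating countably often, every polynomial over the direct limit is
defined at a finite stage and acquires a root at the next one. -/

section SkewEvaluation

variable {L : Type*} [Field L]

theorem map_skewN {σ : K →+* K} {τ : L →+* L} {f : K →+* L} (hf : ∀ x, f (σ x) = τ (f x))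
    (i : ℕ) (a : K) : f (skewN σ i a) = skewN τ i (f a) := by
  induction i with
  | zero => simp [skewN]
  | succ i ih => simp [skewN, hf, ih]

theorem skewEval_map {σ : K →+* K} {τ : L →+* L} {f : K →+* L} (hf : ∀ x, f (σ x) = τ (f x))
    (P : K[X]) (a : K) : skewEval τ (P.map f) (f a) = f (skewEval σ P a) := by
  simp only [skewEval, support_map_of_injective P f.injective, coeff_map, map_sum, map_mul,
    map_skewN hf]

theorem skewEval_zero_right (σ : K →+* K) (P : K[X]) : skewEval σ P 0 = P.coeff 0 := by
  have hN : ∀ i ≠ 0, skewN σ i 0 = 0 := fun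
    | i + 1, _ => by simp [skewN]
  rw [skewEval, Finset.sum_eq_single 0 (fun i _ hi => by rw [hN i hi, mul_zero])
    (fun h => by rw [notMem_support_iff.mp h, zero_mul])]
  simp [skewN]

theorem skewN_sigma_div_self (σ : K →+* K) {b : K} (hb : b ≠ 0) (i : ℕ) :
    skewN σ i (σ b / b) = σ^[i] b / b := by
  induction i with
  | zero => simp [skewN, hb]
  | succ i ih =>
    have hσb : σ b ≠ 0 := (map_ne_zero σ).mpr hb
    rw [Function.iterate_succ_apply', skewN, ih, map_div₀]
    field_simp

noncomputable def recurrenceCoeff (P : K[X]) (i : ℕ) : K :=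
  -(P.coeff i / P.leadingCoeff)

theorem recurrenceCoeff_map (f : K →+* L) (P : K[X]) (i : ℕ) :
    recurrenceCoeff (P.map f) i = f (recurrenceCoeff P i) := by
  simp [recurrenceCoeff, leadingCoeff_map_of_injective f.injective]

theorem recurrenceCoeff_zero_ne_zero {P : K[X]} (hP : P.coeff 0 ≠ 0) :
    recurrenceCoeff P 0 ≠ 0 := by
  have hlc : P.leadingCoeff ≠ 0 := leadingCoeff_ne_zero.mpr fun h => hP (by simp [h])
  simp [recurrenceCoeff, hP, hlc]

theorem skewEval_sigma_div_self_eq_zero (σ : K →+* K) (P : K[X]) {b : K} (hb : b ≠ 0)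
    (hrec : σ^[P.natDegree] b = ∑ i ∈ Finset.range P.natDegree, recurrenceCoeff P i * σ^[i] b) :
    skewEval σ P (σ b / b) = 0 := by
  rcases eq_or_ne P 0 with rfl | hP
  · simp [skewEval]
  have hlc : P.leadingCoeff ≠ 0 := leadingCoeff_ne_zero.mpr hP
  have hsum : ∑ i ∈ Finset.range (P.natDegree + 1), P.coeff i * σ^[i] b = 0 := by
    rw [Finset.sum_range_succ, coeff_natDegree, hrec, Finset.mul_sum, ← Finset.sum_add_distrib]
    refine Finset.sum_eq_zero fun i _ => ?_
    rw [recurrenceCoeff]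
    field_simp
    ring
  rw [skewEval, Finset.sum_subset P.supp_subset_range_natDegree_succ
    (fun i _ hi => by rw [notMem_support_iff.mp hi, zero_mul])]
  simp only [skewN_sigma_div_self σ hb, ← mul_div_assoc, ← Finset.sum_div, hsum, zero_div]

end SkewEvaluation

namespace SkewRootExtension

variable {L : Type u} [Field L] {ι : Type u} (σ : L →+* L) (P : ι → L[X])

/-- `X (i, j)` stands for `σ^[j] b_i`, where `b_i` is to solve the recurrence of `P i`: so
`X (i, j) ↦ X (i, j + 1)`, except that `σ^[n] b_i` (`n` the degree of `P i`) is eliminated through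
the recurrence. The variables `X (i, j)` with `j ≥ n` are harmless extra shifts. -/
noncomputable def shift : MvPolynomial (ι × ℕ) L →ₐ[L] MvPolynomial (ι × ℕ) L :=
  MvPolynomial.aeval fun q =>
    if q.2 + 1 = (P q.1).natDegree then
      ∑ k ∈ Finset.range (P q.1).natDegree,
        MvPolynomial.C (recurrenceCoeff (P q.1) k) * MvPolynomial.X (q.1, k)
    else MvPolynomial.X (q.1, q.2 + 1)

noncomputable def unshift : MvPolynomial (ι × ℕ) L →ₐ[L] MvPolynomial (ι × ℕ) L :=
  MvPolynomial.aeval fun q =>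
    if q.2 = 0 then
      MvPolynomial.C (recurrenceCoeff (P q.1) 0)⁻¹ *
        (MvPolynomial.X (q.1, (P q.1).natDegree - 1) -
          ∑ k ∈ Finset.range ((P q.1).natDegree - 1),
            MvPolynomial.C (recurrenceCoeff (P q.1) (k + 1)) * MvPolynomial.X (q.1, k))
    else MvPolynomial.X (q.1, q.2 - 1)

theorem unshift_comp_shift (hP : ∀ i, (P i).coeff 0 ≠ 0) :
    (unshift P).comp (shift P) = AlgHom.id L _ := by
  refine MvPolynomial.algHom_ext fun ⟨i, j⟩ => ?_
  simp only [AlgHom.comp_apply, AlgHom.id_apply, shift, MvPolynomial.aeval_X]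
  split_ifs with htop
  · rw [map_sum, ← htop, Finset.sum_range_succ']
    simp only [map_mul, unshift, MvPolynomial.aeval_C, MvPolynomial.aeval_X,
      MvPolynomial.algebraMap_eq, if_pos, Nat.succ_ne_zero, if_false, add_tsub_cancel_right,
      ← htop]
    rw [← mul_assoc, ← map_mul, mul_inv_cancel₀ (recurrenceCoeff_zero_ne_zero (hP i)), map_one]
    ring
  · simp [unshift]

theorem shift_injective (hP : ∀ i, (P i).coeff 0 ≠ 0) : Function.Injective (shift P) :=
  Function.LeftInverse.injective (g := unshift P) fun x => by
    rw [← AlgHom.comp_apply, unshift_comp_shift P hP, AlgHom.id_apply]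

abbrev FracField (ι L : Type u) [Field L] : Type u := FractionRing (MvPolynomial (ι × ℕ) L)

noncomputable def sigma (hP : ∀ i, (P i).coeff 0 ≠ 0) : FracField ι L →+* FracField ι L :=
  IsFractionRing.lift (g := (algebraMap _ (FracField ι L)).comp
      ((shift P).toRingHom.comp (MvPolynomial.map σ)))
    ((IsFractionRing.injective _ _).comp
      ((shift_injective P hP).comp (MvPolynomial.map_injective σ σ.injective)))

variable (L) in
noncomputable abbrev var (i : ι) (j : ℕ) : FracField ι L :=
  algebraMap (MvPolynomial (ι × ℕ) L) _ (MvPolynomial.X (i, j))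

variable {σ P}

theorem sigma_algebraMap_mvPolynomial (hP : ∀ i, (P i).coeff 0 ≠ 0)
    (x : MvPolynomial (ι × ℕ) L) :
    sigma σ P hP (algebraMap _ _ x) = algebraMap _ _ (shift P (MvPolynomial.map σ x)) :=
  IsFractionRing.lift_algebraMap _ _

theorem sigma_algebraMap (hP : ∀ i, (P i).coeff 0 ≠ 0) (x : L) :
    sigma σ P hP (algebraMap L _ x) = algebraMap L _ (σ x) := by
  rw [IsScalarTower.algebraMap_apply L (MvPolynomial (ι × ℕ) L),
    sigma_algebraMap_mvPolynomial, MvPolynomial.algebraMap_eq, MvPolynomial.map_C,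
    ← MvPolynomial.algebraMap_eq, AlgHom.commutes, ← IsScalarTower.algebraMap_apply]

theorem sigma_var (hP : ∀ i, (P i).coeff 0 ≠ 0) (i : ι) (j : ℕ) :
    sigma σ P hP (var L i j) =
      if j + 1 = (P i).natDegree then
        ∑ k ∈ Finset.range (P i).natDegree,
          algebraMap L _ (recurrenceCoeff (P i) k) * var L i k
      else var L i (j + 1) := by
  rw [sigma_algebraMap_mvPolynomial, MvPolynomial.map_X, shift, MvPolynomial.aeval_X]
  split_ifs
  · simp only [map_sum, map_mul, ← MvPolynomial.algebraMap_eq,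
      ← IsScalarTower.algebraMap_apply]
  · rfl

theorem exists_root (hP : ∀ i, (P i).coeff 0 ≠ 0) (i : ι) (hdeg : 0 < (P i).natDegree) :
    ∃ a, skewEval (sigma σ P hP) ((P i).map (algebraMap L (FracField ι L))) a = 0 := by
  have hvar : var L i 0 ≠ 0 := (map_ne_zero_iff _ (IsFractionRing.injective _ _)).mpr
    (MvPolynomial.X_ne_zero _)
  have hiter : ∀ j < (P i).natDegree, (sigma σ P hP)^[j] (var L i 0) = var L i j := by
    intro j hj
    induction j with
    | zero => rfl
    | succ j ih =>
      rw [Function.iterate_succ_apply', ih (by omega), sigma_var, if_neg (by omega)]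
  refine ⟨sigma σ P hP (var L i 0) / var L i 0, skewEval_sigma_div_self_eq_zero _ _ hvar ?_⟩
  obtain ⟨m, hm⟩ : ∃ m, (P i).natDegree = m + 1 := Nat.exists_eq_succ_of_ne_zero hdeg.ne'
  rw [natDegree_map_eq_of_injective (algebraMap L _).injective, hm,
    Function.iterate_succ_apply', hiter m (by omega), sigma_var, if_pos hm.symm, hm]
  refine Finset.sum_congr rfl fun k hk => ?_
  rw [recurrenceCoeff_map, hiter k (by rw [hm]; exact Finset.mem_range.mp hk)]

end SkewRootExtension

namespace SigmaField

def IsOneAlgClosed (L : SigmaField.{u}) : Prop :=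
  ∀ P : L.carrier[X], 0 < P.natDegree → ∃ a : L.carrier, skewEval L.sigma P a = 0

theorem exists_extension_skewRoots (L : SigmaField.{u}) :
    ∃ (M : SigmaField.{u}) (ι : L.carrier →+* M.carrier), (∀ x, M.sigma (ι x) = ι (L.sigma x)) ∧
      ∀ P : L.carrier[X], 0 < P.natDegree → ∃ a, skewEval M.sigma (P.map ι) a = 0 := by
  let Q : {P : L.carrier[X] // P.coeff 0 ≠ 0} → L.carrier[X] := Subtype.val
  have hQ : ∀ P, (Q P).coeff 0 ≠ 0 := Subtype.prop
  refine ⟨⟨_, SkewRootExtension.sigma L.sigma Q hQ⟩, algebraMap _ _,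
    SkewRootExtension.sigma_algebraMap hQ, fun P hdeg => ?_⟩
  by_cases h0 : P.coeff 0 = 0
  · exact ⟨0, by rw [skewEval_zero_right, coeff_map, h0, map_zero]⟩
  · exact SkewRootExtension.exists_root hQ ⟨P, h0⟩ hdeg

section Chain

variable (F : ℕ → SigmaField.{u}) (e : ∀ m, (F m).carrier →+* (F (m + 1)).carrier)

def chainMap {i j : ℕ} (h : i ≤ j) : (F i).carrier →+* (F j).carrier :=
  Nat.leRecOn h (fun {k} g => (e k).comp g) (RingHom.id _)

theorem chainMap_self (i : ℕ) : chainMap F e (le_refl i) = RingHom.id _ :=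
  Nat.leRecOn_self _

theorem chainMap_succ {i j : ℕ} (h : i ≤ j) :
    chainMap F e (h.trans j.le_succ) = (e j).comp (chainMap F e h) :=
  Nat.leRecOn_succ h _

theorem chainMap_le_succ (m : ℕ) : chainMap F e m.le_succ = e m :=
  Nat.leRecOn_succ' _

theorem chainMap_comp {i j k : ℕ} (hij : i ≤ j) (hjk : j ≤ k) :
    (chainMap F e hjk).comp (chainMap F e hij) = chainMap F e (hij.trans hjk) := by
  induction k, hjk using Nat.le_induction with
  | base => rw [chainMap_self, RingHom.id_comp]
  | succ k hjk ih => rw [chainMap_succ F e hjk, RingHom.comp_assoc, ih, ← chainMap_succ]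

instance : DirectedSystem (fun m => (F m).carrier) fun _ _ h => chainMap F e h where
  map_self i x := by rw [chainMap_self, RingHom.id_apply]
  map_map {_ _ _} hij hjk x := by rw [← RingHom.comp_apply, chainMap_comp]

noncomputable abbrev ChainLimit : Type u :=
  Ring.DirectLimit (fun m => (F m).carrier) fun _ _ h => chainMap F e h

noncomputable instance : Field (ChainLimit F e) :=
  Field.DirectLimit.field _ fun _ _ h => chainMap F e h

noncomputable def ofChainLimit (m : ℕ) : (F m).carrier →+* ChainLimit F e :=
  Ring.DirectLimit.of (fun m => (F m).carrier) (fun _ _ h => chainMap F e h) m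

theorem ofChainLimit_comp (m : ℕ) : (ofChainLimit F e (m + 1)).comp (e m) = ofChainLimit F e m :=
  RingHom.ext fun x => by
    rw [RingHom.comp_apply, ← chainMap_le_succ F e m]
    exact Ring.DirectLimit.of_f (G := fun m => (F m).carrier)
      (f := fun _ _ h => chainMap F e h) _ x

variable {F e}

theorem chainMap_sigma (he : ∀ m x, (F (m + 1)).sigma (e m x) = e m ((F m).sigma x))
    {i j : ℕ} (h : i ≤ j) (x : (F i).carrier) :
    (F j).sigma (chainMap F e h x) = chainMap F e h ((F i).sigma x) := by
  induction j, h using Nat.le_induction with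
  | base => simp only [chainMap_self, RingHom.id_apply]
  | succ j hij ih => rw [chainMap_succ F e hij, RingHom.comp_apply, RingHom.comp_apply, he, ih]

noncomputable def chainLimitSigma (he : ∀ m x, (F (m + 1)).sigma (e m x) = e m ((F m).sigma x)) :
    ChainLimit F e →+* ChainLimit F e :=
  Ring.DirectLimit.map (fun m => (F m).sigma) fun _ _ h => RingHom.ext (chainMap_sigma he h)

theorem chainLimitSigma_of (he : ∀ m x, (F (m + 1)).sigma (e m x) = e m ((F m).sigma x))
    (m : ℕ) (x : (F m).carrier) :
    chainLimitSigma he (ofChainLimit F e m x) = ofChainLimit F e m ((F m).sigma x) :=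
  Ring.DirectLimit.map_apply_of (f := fun _ _ h => chainMap F e h)
    (f' := fun _ _ h => chainMap F e h) _ _ x

noncomputable def limit (he : ∀ m x, (F (m + 1)).sigma (e m x) = e m ((F m).sigma x)) :
    SigmaField.{u} :=
  ⟨ChainLimit F e, chainLimitSigma he⟩

theorem limit_isOneAlgClosed
    (he : ∀ m x, (F (m + 1)).sigma (e m x) = e m ((F m).sigma x))
    (hroots : ∀ m (P : (F m).carrier[X]), 0 < P.natDegree →
      ∃ a, skewEval (F (m + 1)).sigma (P.map (e m)) a = 0) :
    (limit he).IsOneAlgClosed := by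
  intro P hP
  obtain ⟨m, Q, rfl⟩ :=
    Ring.DirectLimit.Polynomial.exists_of (f' := fun _ _ h => chainMap F e h) P
  change 0 < (Q.map (ofChainLimit F e m)).natDegree at hP
  rw [natDegree_map_eq_of_injective (RingHom.injective _)] at hP
  obtain ⟨a, ha⟩ := hroots m Q hP
  refine ⟨ofChainLimit F e (m + 1) a, ?_⟩
  change skewEval (chainLimitSigma he) (Q.map (ofChainLimit F e m)) _ = 0
  rw [← ofChainLimit_comp, ← Polynomial.map_map,
    skewEval_map fun x => (chainLimitSigma_of he (m + 1) x).symm, ha, map_zero]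

end Chain

noncomputable def tower (K : SigmaField.{u}) : ℕ → SigmaField.{u}
  | 0 => K
  | m + 1 => (exists_extension_skewRoots (tower K m)).choose

noncomputable def towerStep (K : SigmaField.{u}) (m : ℕ) :
    (tower K m).carrier →+* (tower K (m + 1)).carrier :=
  (exists_extension_skewRoots (tower K m)).choose_spec.choose

theorem towerStep_sigma (K : SigmaField.{u}) (m : ℕ) (x : (tower K m).carrier) :
    (tower K (m + 1)).sigma (towerStep K m x) = towerStep K m ((tower K m).sigma x) :=
  (exists_extension_skewRoots (tower K m)).choose_spec.choose_spec.1 x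

theorem towerStep_skewRoots (K : SigmaField.{u}) (m : ℕ) (P : (tower K m).carrier[X])
    (hP : 0 < P.natDegree) : ∃ a, skewEval (tower K (m + 1)).sigma (P.map (towerStep K m)) a = 0 :=
  (exists_extension_skewRoots (tower K m)).choose_spec.choose_spec.2 P hP

end SigmaField

/-- Every σ-field embeds as a σ-subfield into a 1-algebraically closed σ-field, i.e. one in
which every nonconstant skew polynomial has a right root. -/
theorem stmt_12 (K : Type u) [Field K] (σ : K →+* K) :
    ∃ (L : SigmaField.{u}) (ι : K →+* L.carrier),
      (∀ x : K, L.sigma (ι x) = ι (σ x)) ∧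
      (∀ P : Polynomial L.carrier, 0 < P.natDegree →
        ∃ a : L.carrier, skewEval L.sigma P a = 0) := by
  let K' : SigmaField.{u} := ⟨K, σ⟩
  have he := SigmaField.towerStep_sigma K'
  refine ⟨SigmaField.limit he, SigmaField.ofChainLimit K'.tower K'.towerStep 0, ?_, ?_⟩
  · exact SigmaField.chainLimitSigma_of he 0
  · exact SigmaField.limit_isOneAlgClosed he (SigmaField.towerStep_skewRoots K')
end

section
/- Let c be a cardinal number, let (K, σ) be a c-algebraically closed σ-field, and let (L, σ_L) be a σ-extension of (K, σ) such that σ_L is an automorphism of L and for every u ∈ L there exists n ≥ 1 with σ_L^n(u) ∈ K (i.e., (L, σ_L) is the inversive closure of (K, σ)). Then (L, σ_L) is c-algebraically closed. -/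
open Polynomial

variable {K : Type*} [Field K]

universe u

lemma skewN_sigma (σ : K →+* K) (i : ℕ) (a : K) :
    skewN σ i (σ a) = σ (skewN σ i a) := by
  induction i with
  | zero => simp [skewN]
  | succ n ih => simp [skewN, ih, map_mul]

lemma skewN_iter (σ : K →+* K) (n i : ℕ) (a : K) :
    skewN σ i ((⇑σ)^[n] a) = (⇑σ)^[n] (skewN σ i a) := by
  induction n with
  | zero => simp
  | succ m ih =>
      rw [Function.iterate_succ_apply', Function.iterate_succ_apply', skewN_sigma, ih]

lemma support_map_pow (σ : K →+* K) (hinj : Function.Injective σ) (n : ℕ) (P : Polynomial K) :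
    (P.map (σ ^ n)).support = P.support := by
  ext i
  simp only [Polynomial.mem_support_iff, Polynomial.coeff_map]
  constructor
  · intro h h0; exact h (by rw [h0, map_zero])
  · intro h h0
    exact h (hinj.iterate n (by simpa [RingHom.coe_pow] using h0))

lemma skewEval_map_s14 (σ : K →+* K) (hinj : Function.Injective σ) (n : ℕ) (P : Polynomial K)
    (a : K) :
    skewEval σ (P.map (σ ^ n)) ((⇑σ)^[n] a) = (⇑σ)^[n] (skewEval σ P a) := by
  have hit : ∀ x y : K, (⇑σ)^[n] (x * y) = (⇑σ)^[n] x * (⇑σ)^[n] y := by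
    intro x y
    induction n with
    | zero => simp
    | succ m ih => simp [Function.iterate_succ_apply', ih, map_mul]
  unfold skewEval
  rw [support_map_pow σ hinj n P]
  have hsum : (⇑σ)^[n] (∑ i ∈ P.support, P.coeff i * skewN σ i a)
      = ∑ i ∈ P.support, (⇑σ)^[n] (P.coeff i * skewN σ i a) := by
    rw [← RingHom.coe_pow, map_sum]
  rw [hsum]
  refine Finset.sum_congr rfl fun i _ => ?_
  rw [Polynomial.coeff_map, skewN_iter, hit, RingHom.coe_pow]

/-- If `(L, σL)` is the inversive closure of a σ-subfield `(K, σ)` (σL is an automorphism and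
every element of `L` lands in `K` under some positive iterate of `σL`), and `(K, σ)` is
`c`-algebraically closed, then `(L, σL)` is `c`-algebraically closed. -/
theorem stmt_14 (c : Cardinal.{u}) (L : Type u) [Field L] (σL : L →+* L)
    (hbij : Function.Bijective σL) (K : Subfield L) (hK : ∀ x ∈ K, σL x ∈ K)
    (hinv : ∀ u : L, ∃ n : ℕ, 1 ≤ n ∧ (⇑σL)^[n] u ∈ K)
    (hKclosed : ∀ P : Polynomial L, (∀ i, P.coeff i ∈ K) →
      1 < P.natDegree → P.coeff 0 ≠ 0 →
        c ≤ Cardinal.mk {x : L // x ∈ K ∧ skewEval σL P x = 0}) :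
    ∀ P : Polynomial L, 1 < P.natDegree → P.coeff 0 ≠ 0 →
      c ≤ Cardinal.mk {x : L // skewEval σL P x = 0} := by
  intro P hdeg h0
  have hinj : Function.Injective σL := hbij.injective
  -- choose n_i for each coefficient
  have hexists : ∀ i : ℕ, ∃ n : ℕ, (⇑σL)^[n] (P.coeff i) ∈ K := fun i =>
    ⟨(hinv (P.coeff i)).choose, (hinv (P.coeff i)).choose_spec.2⟩
  classical
  choose f hf using hexists
  set N : ℕ := P.support.sup f with hN
  have hmono : ∀ i, ∀ m, (⇑σL)^[m] (P.coeff i) ∈ K → ∀ k, m ≤ k → (⇑σL)^[k] (P.coeff i) ∈ K := by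
    intro i m hm k hk
    obtain ⟨d, rfl⟩ := Nat.exists_eq_add_of_le hk
    induction d with
    | zero => simpa using hm
    | succ e ih =>
        have : m + (e + 1) = (m + e) + 1 := by ring
        rw [this, Function.iterate_succ_apply']
        exact hK _ (ih (Nat.le_add_right _ _))
  have hcoeffK : ∀ i, (⇑σL)^[N] (P.coeff i) ∈ K := by
    intro i
    by_cases hi : i ∈ P.support
    · exact hmono i (f i) (hf i) N (Finset.le_sup hi)
    · have : P.coeff i = 0 := by simpa [Polynomial.mem_support_iff] using hi
      rw [this, Function.iterate_fixed (map_zero σL)]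
      exact zero_mem K
  set Q : Polynomial L := P.map (σL ^ N) with hQ
  have hQcoeff : ∀ i, Q.coeff i ∈ K := by
    intro i
    rw [hQ, Polynomial.coeff_map, RingHom.coe_pow]
    exact hcoeffK i
  have hQdeg : Q.natDegree = P.natDegree := by
    apply Polynomial.natDegree_map_eq_of_injective
    rw [RingHom.coe_pow]; exact hinj.iterate N
  have hQ0 : Q.coeff 0 ≠ 0 := by
    rw [hQ, Polynomial.coeff_map]
    intro h
    exact h0 ((hinj.iterate N) (by simpa [RingHom.coe_pow] using h))
  have hc := hKclosed Q hQcoeff (hQdeg ▸ hdeg) hQ0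
  refine le_trans hc ?_
  -- build injection from K-roots of Q into roots of P
  set e : L ≃+* L := RingEquiv.ofBijective σL hbij with he
  have hcoe : (⇑σL) = ⇑e := rfl
  refine Cardinal.mk_le_of_injective (f := fun x : {x : L // x ∈ K ∧ skewEval σL Q x = 0} =>
    (⟨(⇑e.symm)^[N] x.1, ?_⟩ : {x : L // skewEval σL P x = 0})) ?_
  · have hiter : (⇑σL)^[N] ((⇑e.symm)^[N] x.1) = x.1 := by
      rw [hcoe]
      exact Function.LeftInverse.iterate e.apply_symm_apply N x.1
    have := skewEval_map_s14 σL hinj N P ((⇑e.symm)^[N] x.1)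
    rw [hiter] at this
    have h2 : (⇑σL)^[N] (skewEval σL P ((⇑e.symm)^[N] x.1)) = 0 := by
      rw [← this, ← hQ]; exact x.2.2
    have h3 := (hinj.iterate N) (a₁ := skewEval σL P ((⇑e.symm)^[N] x.1)) (a₂ := 0)
    apply h3
    rw [h2]
    simp [Function.iterate_fixed (map_zero σL)]
  · intro x y hxy
    have := congrArg Subtype.val hxy
    simp only at this
    have : x.1 = y.1 := (e.symm.injective.iterate N) this
    exact Subtype.ext this
end
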